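/- (Sparse form bound implies norm bound) Let 0 ≤ α < 2n, q > 0, v a weight, g₁,g₂ nonnegative locally integrable, 𝒟 a dyadic grid, and {Q_j^k} the sparse CZ family for ℳ^𝒟_α(g₁,g₂) with parameter a = 2^{(2-α/n)(n+1)}. Then ∫_{ℝⁿ} ℳ^𝒟_α(g₁,g₂)^q v dx ≤ C(n,α,q) ∑_{k,j} (|Q_j^k|^{-(2-α/n)} ∫_{Q_j^k} g₁ ∫_{Q_j^k} g₂)^q v(E(Q_j^k)), where E(Q_j^k) = Q_j^k ∖ Ω_{k+1} and v(E) = ∫_E v dx. -/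

import Mathlib

open MeasureTheory ENNReal Set
open scoped BigOperators

noncomputable section

abbrev Rn (n : ℕ) := Fin n → ℝ

/-- An axis-parallel half-open cube with corner `c` and side length `l`. -/
def cube {n : ℕ} (c : Rn n) (l : ℝ) : Set (Rn n) :=
  {x | ∀ i, c i ≤ x i ∧ x i < c i + l}

/-- `σ(Q) = ∫_Q σ dx`. -/
def wtI {n : ℕ} (σ : Rn n → ℝ≥0∞) (Q : Set (Rn n)) : ℝ≥0∞ := ∫⁻ x in Q, σ x

/-- `𝔼^σ_Q f = σ(Q)⁻¹ ∫_Q f σ`. -/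
def avgE {n : ℕ} (σ f : Rn n → ℝ≥0∞) (Q : Set (Rn n)) : ℝ≥0∞ :=
  (wtI σ Q)⁻¹ * ∫⁻ x in Q, f x * σ x

/-- The cube `2^{-k}([0,1)ⁿ + m + (-1)^k t)` of the shifted dyadic grid. -/
def gridCube (n : ℕ) (k : ℤ) (m : Fin n → ℤ) (t : Fin n → ℝ) : Set (Rn n) :=
  {x | ∀ i, (2:ℝ) ^ (-k) * ((m i : ℝ) + (-1:ℝ) ^ k * t i) ≤ x i ∧
       x i < (2:ℝ) ^ (-k) * ((m i : ℝ) + (-1:ℝ) ^ k * t i + 1)}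

/-- The shifted dyadic grid `𝒟_t`. -/
def shiftedGrid (n : ℕ) (t : Fin n → ℝ) : Set (Set (Rn n)) :=
  {Q | ∃ (k : ℤ) (m : Fin n → ℤ), Q = gridCube n k m t}

/-- Abstract dyadic grid: cubes of dyadic side lengths, nested or disjoint,
and for each scale the cubes of that side length cover `ℝⁿ`. -/
def IsDyadicGrid {n : ℕ} (𝒟 : Set (Set (Rn n))) : Prop :=
  (∀ Q ∈ 𝒟, ∃ (c : Rn n) (k : ℤ), Q = cube c ((2:ℝ) ^ k)) ∧
  (∀ Q ∈ 𝒟, ∀ R ∈ 𝒟, Q ∩ R = Q ∨ Q ∩ R = R ∨ Q ∩ R = ∅) ∧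
  (∀ k : ℤ, (⋃ Q ∈ {Q | Q ∈ 𝒟 ∧ ∃ c : Rn n, Q = cube c ((2:ℝ) ^ k)}, Q) = univ)

/-- The multilinear fractional maximal operator `ℳ_α`. -/
def MM (n m : ℕ) (α : ℝ) (g : Fin m → Rn n → ℝ≥0∞) (x : Rn n) : ℝ≥0∞ :=
  ⨆ (c : Rn n) (l : ℝ) (_ : 0 < l) (_ : x ∈ cube c l),
    ∏ i, (volume (cube c l) ^ (-(1 - α / ((m : ℝ) * (n : ℝ)))) * ∫⁻ y in cube c l, g i y)

/-- The multilinear fractional maximal operator restricted to a grid `𝒟`. -/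
def MMD (n m : ℕ) (α : ℝ) (𝒟 : Set (Set (Rn n))) (g : Fin m → Rn n → ℝ≥0∞)
    (x : Rn n) : ℝ≥0∞ :=
  ⨆ (Q : Set (Rn n)) (_ : Q ∈ 𝒟) (_ : x ∈ Q),
    ∏ i, (volume Q ^ (-(1 - α / ((m : ℝ) * (n : ℝ)))) * ∫⁻ y in Q, g i y)

/-- The bilinear fractional maximal operator `ℳ_α(g₁,g₂)`. -/
def M2 (n : ℕ) (α : ℝ) (g₁ g₂ : Rn n → ℝ≥0∞) (x : Rn n) : ℝ≥0∞ :=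
  ⨆ (c : Rn n) (l : ℝ) (_ : 0 < l) (_ : x ∈ cube c l),
    (volume (cube c l) ^ (-(1 - α / (2 * (n : ℝ)))) * ∫⁻ y in cube c l, g₁ y) *
      (volume (cube c l) ^ (-(1 - α / (2 * (n : ℝ)))) * ∫⁻ y in cube c l, g₂ y)

/-- The bilinear dyadic fractional maximal operator `ℳ^𝒟_α(g₁,g₂)`. -/
def M2D (n : ℕ) (α : ℝ) (𝒟 : Set (Set (Rn n))) (g₁ g₂ : Rn n → ℝ≥0∞) (x : Rn n) : ℝ≥0∞ :=
  ⨆ (Q : Set (Rn n)) (_ : Q ∈ 𝒟) (_ : x ∈ Q),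
    (volume Q ^ (-(1 - α / (2 * (n : ℝ)))) * ∫⁻ y in Q, g₁ y) *
      (volume Q ^ (-(1 - α / (2 * (n : ℝ)))) * ∫⁻ y in Q, g₂ y)

/-- Sawyer's bilinear testing constant `[w⃗,v]_{S_{P⃗,q}}`. -/
def sawyer2 (n : ℕ) (α p₁ p₂ q : ℝ) (σ₁ σ₂ v : Rn n → ℝ≥0∞) : ℝ≥0∞ :=
  ⨆ (c : Rn n) (l : ℝ) (_ : 0 < l),
    (∫⁻ x in cube c l,
        M2 n α ((cube c l).indicator σ₁) ((cube c l).indicator σ₂) x ^ q * v x) ^ (1/q) /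
      (wtI σ₁ (cube c l) ^ (1/p₁) * wtI σ₂ (cube c l) ^ (1/p₂))

/-- Sawyer's multilinear testing constant. -/
def sawyerM (n m : ℕ) (α q : ℝ) (p : Fin m → ℝ) (σ : Fin m → Rn n → ℝ≥0∞)
    (v : Rn n → ℝ≥0∞) : ℝ≥0∞ :=
  ⨆ (c : Rn n) (l : ℝ) (_ : 0 < l),
    (∫⁻ x in cube c l, MM n m α (fun i => (cube c l).indicator (σ i)) x ^ q * v x) ^ (1/q) /
      ∏ i, wtI (σ i) (cube c l) ^ (1 / p i)

/-- The principal cubes of `f` relative to `σ` inside `Qbar`, generation by generation. -/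
def principalCubes {n : ℕ} (𝒟 : Set (Set (Rn n))) (σ f : Rn n → ℝ≥0∞)
    (Qbar : Set (Rn n)) : ℕ → Set (Set (Rn n))
  | 0 => {Qbar}
  | k + 1 => {G' | G' ∈ 𝒟 ∧ ∃ G ∈ principalCubes 𝒟 σ f Qbar k, G' ⊆ G ∧
      4 * avgE σ f G < avgE σ f G' ∧
      ∀ G'' ∈ 𝒟, G' ⊆ G'' → G'' ⊆ G → 4 * avgE σ f G < avgE σ f G'' → G'' = G'}

/-!
Write `p = 2 - α / n ∈ (0, 2]`. On the layer `Ω k \ Ω (k + 1)` one has `ℳ ≤ a ^ (k + 1)`, and the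
layer is covered by the maximal grid cubes `Q ⊆ Ω k`; so everything reduces to
`a ^ k ≤ |Q| ^ (-p) ∫_Q g₁ ∫_Q g₂` for those `Q`. Each such `Q` is the disjoint union of grid cubes
`P ⊆ Q` with `c |P| ^ p ≤ ∫_P g₁ ∫_P g₂` (`c = a ^ k`), and because `p ≤ 2` this inequality passes
to disjoint unions: `t ↦ t ^ (p / 2)` is subadditive and Cauchy–Schwarz bounds
`∑ (∫_P g₁ ∫_P g₂) ^ (1 / 2)`. The same covering gives `a ^ k |Ω k| ^ p ≤ ‖g₁‖₁ ‖g₂‖₁`, so `Ω k` has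
finite measure (hence maximal cubes exist) and `⋂ k, Ω k` is null.
-/

namespace ENNReal

variable {ι : Type*}

theorem inner_le_Lp_mul_Lq_tsum (f g : ι → ℝ≥0∞) {p q : ℝ} (hpq : p.HolderConjugate q) :
    ∑' i, f i * g i ≤ (∑' i, f i ^ p) ^ (1 / p) * (∑' i, g i ^ q) ^ (1 / q) := by
  rw [ENNReal.tsum_eq_iSup_sum]
  refine iSup_le fun s => (inner_le_Lp_mul_Lq s f g hpq).trans ?_
  gcongr
  · exact one_div_nonneg.2 hpq.nonneg
  · exact ENNReal.sum_le_tsum s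
  · exact one_div_nonneg.2 hpq.symm.nonneg
  · exact ENNReal.sum_le_tsum s

theorem rpow_tsum_le_tsum_rpow (f : ι → ℝ≥0∞) {θ : ℝ} (h0 : 0 < θ) (h1 : θ ≤ 1) :
    (∑' i, f i) ^ θ ≤ ∑' i, f i ^ θ := by
  have hfin : ∀ s : Finset ι, (∑ i ∈ s, f i) ^ θ ≤ ∑ i ∈ s, f i ^ θ := by
    intro s
    induction s using Finset.cons_induction with
    | empty => simp [h0]
    | cons i s hi ih =>
      rw [Finset.sum_cons, Finset.sum_cons]
      exact (rpow_add_le_add_rpow _ _ h0.le h1).trans (by gcongr)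
  rw [← le_rpow_inv_iff h0, ENNReal.tsum_eq_iSup_sum]
  exact iSup_le fun s => (le_rpow_inv_iff h0).2 ((hfin s).trans (ENNReal.sum_le_tsum s))

theorem mul_tsum_rpow_le_tsum_mul_tsum {c : ℝ≥0∞} {a x y : ι → ℝ≥0∞} {p : ℝ} (hp0 : 0 < p)
    (hp2 : p ≤ 2) (h : ∀ i, c * a i ^ p ≤ x i * y i) :
    c * (∑' i, a i) ^ p ≤ (∑' i, x i) * ∑' i, y i := by
  have hsqrt : ∀ z : ℝ≥0∞, (z ^ (1 / 2 : ℝ)) ^ (2 : ℝ) = z := fun z => by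
    rw [← ENNReal.rpow_mul]; norm_num
  rw [← ENNReal.rpow_le_rpow_iff (by norm_num : (0 : ℝ) < 1 / 2)]
  calc (c * (∑' i, a i) ^ p) ^ (1 / 2 : ℝ)
      = c ^ (1 / 2 : ℝ) * (∑' i, a i) ^ (p / 2) := by
        rw [ENNReal.mul_rpow_of_nonneg _ _ (by norm_num), ← ENNReal.rpow_mul]; ring_nf
    _ ≤ c ^ (1 / 2 : ℝ) * ∑' i, a i ^ (p / 2) := by
        gcongr; exact rpow_tsum_le_tsum_rpow a (by positivity) (by linarith)
    _ = ∑' i, (c * a i ^ p) ^ (1 / 2 : ℝ) := by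
        rw [← ENNReal.tsum_mul_left]
        congr 1; funext i
        rw [ENNReal.mul_rpow_of_nonneg _ _ (by norm_num), ← ENNReal.rpow_mul]; ring_nf
    _ ≤ ∑' i, x i ^ (1 / 2 : ℝ) * y i ^ (1 / 2 : ℝ) := by
        gcongr with i
        rw [← ENNReal.mul_rpow_of_nonneg _ _ (by norm_num)]
        exact ENNReal.rpow_le_rpow (h i) (by norm_num)
    _ ≤ (∑' i, (x i ^ (1 / 2 : ℝ)) ^ (2 : ℝ)) ^ (1 / 2 : ℝ) *
          (∑' i, (y i ^ (1 / 2 : ℝ)) ^ (2 : ℝ)) ^ (1 / 2 : ℝ) :=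
        inner_le_Lp_mul_Lq_tsum _ _ Real.HolderConjugate.two_two
    _ = ((∑' i, x i) * ∑' i, y i) ^ (1 / 2 : ℝ) := by
        simp only [hsqrt, ENNReal.mul_rpow_of_nonneg _ _ (by norm_num : (0 : ℝ) ≤ 1 / 2)]

theorem le_rpow_inv_of_mul_rpow_le {c x K : ℝ≥0∞} {p : ℝ} (hc0 : c ≠ 0) (hct : c ≠ ∞)
    (hp : 0 < p) (h : c * x ^ p ≤ K) : x ≤ (c⁻¹ * K) ^ p⁻¹ :=
  (le_rpow_inv_iff hp).2 ((mul_le_iff_le_inv hc0 hct).1 h)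

theorem eq_zero_of_forall_zpow_mul_le {a c K : ℝ≥0∞} (ha : 1 < a) (ha' : a ≠ ∞) (hK : K ≠ ∞)
    (h : ∀ k : ℤ, a ^ k * c ≤ K) : c = 0 := by
  by_contra hc
  have hct : c ≠ ∞ := fun hc' => hK (top_le_iff.1 (by simpa [hc'] using h 0))
  have hKc : K / c ≠ ∞ := ENNReal.div_ne_top hK hc
  obtain ⟨k, -, hk⟩ := exists_mem_Ioc_zpow (x := K / c + 1) (by simp) (by simpa using hKc) ha ha'
  have hle : a ^ (k + 1) ≤ K / c := (ENNReal.le_div_iff_mul_le (Or.inl hc) (Or.inl hct)).2 (h _)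
  exact (ENNReal.lt_add_right hKc one_ne_zero).not_ge (hk.trans hle)

end ENNReal

/-- The layers `a ^ k < f ≤ a ^ (k + 1)` cover `{f ≠ 0}` up to `⋂ k, {a ^ k < f}`, which
contains `{f = ∞}`. -/
theorem lintegral_rpow_mul_le_tsum_layers {X : Type*} [MeasurableSpace X] (μ : Measure X)
    {f w : X → ℝ≥0∞} (hw : Measurable w) {a : ℝ≥0∞} (ha : 1 < a) (ha' : a ≠ ∞) {q : ℝ}
    (hq : 0 < q) (hnull : μ (⋂ k : ℤ, {x | a ^ k < f x}) = 0) :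
    ∫⁻ x, f x ^ q * w x ∂μ ≤
      ∑' k : ℤ, (a ^ (k + 1)) ^ q *
        ∫⁻ x in {x | a ^ k < f x} \ {x | a ^ (k + 1) < f x}, w x ∂μ := by
  have ha0 : a ≠ 0 := (zero_lt_one.trans ha).ne'
  set L : ℤ → Set X := fun k => {x | a ^ k < f x} \ {x | a ^ (k + 1) < f x}
  have hcover : univ ⊆ {x | f x = 0} ∪ ((⋂ k : ℤ, {x | a ^ k < f x}) ∪ ⋃ k, L k) := by
    intro x _
    by_cases h0 : f x = 0
    · exact Or.inl h0
    by_cases htop : f x = ∞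
    · exact Or.inr (Or.inl (mem_iInter.2 fun k => by
        simpa [htop] using ENNReal.zpow_lt_top ha0 ha' k))
    obtain ⟨k, hk⟩ := ENNReal.exists_mem_Ioc_zpow h0 htop ha ha'
    exact Or.inr (Or.inr (mem_iUnion.2 ⟨k, hk.1, not_lt.2 hk.2⟩))
  have hzero : ∫⁻ x in {x | f x = 0}, f x ^ q * w x ∂μ ≤ 0 :=
    (setLIntegral_mono measurable_const fun x (hx : f x = 0) => by
      rw [hx, ENNReal.zero_rpow_of_pos hq, zero_mul]).trans_eq lintegral_zero
  calc ∫⁻ x, f x ^ q * w x ∂μ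
      ≤ ∫⁻ x in {x | f x = 0} ∪ ((⋂ k : ℤ, {x | a ^ k < f x}) ∪ ⋃ k, L k), f x ^ q * w x ∂μ := by
        rw [← setLIntegral_univ]; exact lintegral_mono_set hcover
    _ ≤ 0 + (0 + ∑' k, ∫⁻ x in L k, f x ^ q * w x ∂μ) := by
        refine (lintegral_union_le _ _ _).trans (add_le_add hzero
          ((lintegral_union_le _ _ _).trans (add_le_add (setLIntegral_measure_zero _ _ hnull).le
            (lintegral_iUnion_le _ _))))
    _ ≤ ∑' k, (a ^ (k + 1)) ^ q * ∫⁻ x in L k, w x ∂μ := by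
        rw [zero_add, zero_add]
        refine ENNReal.tsum_le_tsum fun k => ?_
        rw [← lintegral_const_mul _ hw]
        exact setLIntegral_mono (hw.const_mul _) fun x hx =>
          mul_le_mul_left (ENNReal.rpow_le_rpow (not_lt.1 hx.2) hq.le) _

section Cube

variable {n : ℕ}

theorem cube_eq_pi (c : Rn n) (l : ℝ) : cube c l = univ.pi fun i => Ico (c i) (c i + l) := by
  ext x; simp [cube, Set.mem_pi]

theorem measurableSet_cube (c : Rn n) (l : ℝ) : MeasurableSet (cube c l) := by
  rw [cube_eq_pi]; exact MeasurableSet.univ_pi fun _ => measurableSet_Ico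

theorem volume_cube (c : Rn n) (l : ℝ) : volume (cube c l) = ENNReal.ofReal l ^ n := by
  rw [cube_eq_pi, volume_pi_pi]; simp [Real.volume_Ico]

theorem cube_subset_cube_iff {c c' : Rn n} {l l' : ℝ} (hl : 0 < l) :
    cube c l ⊆ cube c' l' ↔ ∀ i, c' i ≤ c i ∧ c i + l ≤ c' i + l' := by
  rw [cube_eq_pi, cube_eq_pi, univ_pi_subset_univ_pi_iff]
  simp [Set.Ico_subset_Ico_iff (lt_add_of_pos_right _ hl), Set.Ico_eq_empty_iff, hl]

theorem cube_subset_of_subset_of_le {c c' : Rn n} {l l' : ℝ} (hl : 0 < l) (hl' : 0 < l')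
    (h : cube c' l' ⊆ cube c l) (hle : l ≤ l') : cube c l ⊆ cube c' l' := by
  rw [cube_subset_cube_iff hl'] at h
  rw [cube_subset_cube_iff hl]
  exact fun i => ⟨by linarith [h i], by linarith [h i]⟩

theorem ofReal_le_volume_cube_zpow (hn : 0 < n) (c : Rn n) (k : ℤ) :
    ENNReal.ofReal k ≤ volume (cube c ((2 : ℝ) ^ k)) := by
  rw [volume_cube, ← ENNReal.ofReal_pow (by positivity)]
  refine ENNReal.ofReal_le_ofReal ?_
  rcases le_or_gt k 0 with hk | hk
  · exact (Int.cast_nonpos.2 hk).trans (by positivity)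
  · lift k to ℕ using hk.le
    calc ((k : ℤ) : ℝ) ≤ (2 : ℝ) ^ (k : ℤ) := by
          rw [zpow_natCast]; exact_mod_cast Nat.lt_two_pow_self.le
      _ ≤ ((2 : ℝ) ^ (k : ℤ)) ^ n := le_self_pow₀ (one_le_zpow₀ one_le_two hk.le) hn.ne'

end Cube

namespace IsDyadicGrid

variable {n : ℕ} {𝒟 : Set (Set (Rn n))} (h𝒟 : IsDyadicGrid 𝒟)
include h𝒟

theorem measurableSet {Q : Set (Rn n)} (hQ : Q ∈ 𝒟) : MeasurableSet Q := by
  obtain ⟨c, k, rfl⟩ := h𝒟.1 Q hQ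
  exact measurableSet_cube c _

theorem volume_ne_zero {Q : Set (Rn n)} (hQ : Q ∈ 𝒟) : volume Q ≠ 0 := by
  obtain ⟨c, k, rfl⟩ := h𝒟.1 Q hQ
  rw [volume_cube]
  exact pow_ne_zero n (ENNReal.ofReal_pos.2 (zpow_pos two_pos k)).ne'

theorem volume_ne_top {Q : Set (Rn n)} (hQ : Q ∈ 𝒟) : volume Q ≠ ∞ := by
  obtain ⟨c, k, rfl⟩ := h𝒟.1 Q hQ
  rw [volume_cube]
  exact ENNReal.pow_ne_top ENNReal.ofReal_ne_top

theorem subset_or_subset {P Q : Set (Rn n)} (hP : P ∈ 𝒟) (hQ : Q ∈ 𝒟) (hPQ : (P ∩ Q).Nonempty) :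
    P ⊆ Q ∨ Q ⊆ P := by
  rcases h𝒟.2.1 P hP Q hQ with h | h | h
  · exact Or.inl (inter_eq_left.1 h)
  · exact Or.inr (inter_eq_right.1 h)
  · exact absurd h hPQ.ne_empty

theorem pairwiseDisjoint_maximal {s : Set (Set (Rn n))} (hs : s ⊆ 𝒟) :
    {Q | Maximal (· ∈ s) Q}.PairwiseDisjoint id := by
  intro P hP Q hQ hPQ
  rw [Function.onFun, id, id, Set.disjoint_iff_inter_eq_empty]
  by_contra hne
  rcases h𝒟.subset_or_subset (hs hP.prop) (hs hQ.prop) (nonempty_iff_ne_empty.2 hne) with h | h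
  · exact hPQ (hP.eq_of_subset hQ.prop h)
  · exact hPQ (hQ.eq_of_subset hP.prop h).symm

theorem countable_of_pairwiseDisjoint {s : Set (Set (Rn n))} (hs : s ⊆ 𝒟)
    (hd : s.PairwiseDisjoint id) : s.Countable := by
  have hpos := Measure.countable_meas_pos_of_disjoint_iUnion (μ := volume)
    (As := fun Q : s => (Q : Set (Rn n))) (fun Q => h𝒟.measurableSet (hs Q.2))
    (fun P Q hPQ => hd P.2 Q.2 (Subtype.coe_injective.ne hPQ))
  have huniv : {Q : s | 0 < volume (Q : Set (Rn n))} = univ :=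
    eq_univ_of_forall fun Q => pos_iff_ne_zero.2 (h𝒟.volume_ne_zero (hs Q.2))
  rw [huniv, countable_univ_iff] at hpos
  exact countable_coe_iff.1 hpos

/-- Grid cubes of bounded volume have bounded side length, and two grid cubes through one point
are nested; so the largest cube of `s` through `x` exists. -/
theorem exists_maximal_mem (hn : 0 < n) {s : Set (Set (Rn n))} (hs : s ⊆ 𝒟) {V : ℝ≥0∞}
    (hV : V ≠ ∞) (hvol : ∀ Q ∈ s, volume Q ≤ V) {P : Set (Rn n)} (hP : P ∈ s) {x : Rn n}
    (hx : x ∈ P) : ∃ Q, Maximal (· ∈ s) Q ∧ x ∈ Q := by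
  let K : Set ℤ := {k | ∃ c, cube c ((2 : ℝ) ^ k) ∈ s ∧ x ∈ cube c ((2 : ℝ) ^ k)}
  have hK : BddAbove K := ⟨⌈V.toReal⌉, fun k ⟨c, hcs, _⟩ => Int.cast_le.1 <|
    ((ENNReal.ofReal_le_iff_le_toReal hV).1
      ((ofReal_le_volume_cube_zpow hn c k).trans (hvol _ hcs))).trans (Int.le_ceil _)⟩
  have hKne : K.Nonempty := by
    obtain ⟨c, k, rfl⟩ := h𝒟.1 P (hs hP)
    exact ⟨k, c, hP, hx⟩
  obtain ⟨k₀, ⟨c₀, hs₀, hx₀⟩, hk₀⟩ := Int.exists_greatest_of_bdd hK hKne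
  refine ⟨_, ⟨hs₀, fun R hR hsub => ?_⟩, hx₀⟩
  obtain ⟨c, k, rfl⟩ := h𝒟.1 R (hs hR)
  exact cube_subset_of_subset_of_le (zpow_pos two_pos k) (zpow_pos two_pos k₀) hsub
    (zpow_le_zpow_right₀ one_le_two (hk₀ k ⟨c, hR, hsub hx₀⟩))

end IsDyadicGrid

def maximalCubes {n : ℕ} (𝒟 : Set (Set (Rn n))) (E : Set (Rn n)) : Set (Set (Rn n)) :=
  {Q | Maximal (· ∈ {R | R ∈ 𝒟 ∧ R ⊆ E}) Q}

theorem maximalCubes_eq {n : ℕ} (𝒟 : Set (Set (Rn n))) (E : Set (Rn n)) :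
    maximalCubes 𝒟 E = {Q | Q ∈ 𝒟 ∧ Q ⊆ E ∧ ∀ R ∈ 𝒟, Q ⊆ R → R ⊆ E → R = Q} := by
  ext Q
  exact ⟨fun ⟨⟨hQ, hQE⟩, hmax⟩ => ⟨hQ, hQE, fun R hR hQR hRE => (hmax ⟨hR, hRE⟩ hQR).antisymm hQR⟩,
    fun ⟨hQ, hQE, hmax⟩ => ⟨⟨hQ, hQE⟩, fun R ⟨hR, hRE⟩ hQR => (hmax R hR hQR hRE).le⟩⟩

section Sparse

variable {n : ℕ} {𝒟 : Set (Set (Rn n))}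

theorem IsDyadicGrid.mul_volume_sUnion_rpow_le (h𝒟 : IsDyadicGrid 𝒟) (hn : 0 < n) {p : ℝ}
    (hp0 : 0 < p) (hp2 : p ≤ 2) {c : ℝ≥0∞} (hc0 : c ≠ 0) (hct : c ≠ ∞) {g₁ g₂ : Rn n → ℝ≥0∞}
    (hA : (∫⁻ x, g₁ x) ≠ ∞) (hB : (∫⁻ x, g₂ x) ≠ ∞) {s : Set (Set (Rn n))} (hs : s ⊆ 𝒟)
    (h : ∀ Q ∈ s, c * volume Q ^ p ≤ (∫⁻ y in Q, g₁ y) * ∫⁻ y in Q, g₂ y) :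
    c * volume (⋃₀ s) ^ p ≤ (∫⁻ y in ⋃₀ s, g₁ y) * ∫⁻ y in ⋃₀ s, g₂ y := by
  set t := {Q | Maximal (· ∈ s) Q}
  have hvol : ∀ Q ∈ s, volume Q ≤ (c⁻¹ * ((∫⁻ x, g₁ x) * ∫⁻ x, g₂ x)) ^ p⁻¹ := fun Q hQ =>
    ENNReal.le_rpow_inv_of_mul_rpow_le hc0 hct hp0 <| (h Q hQ).trans <|
      mul_le_mul' (setLIntegral_le_lintegral _ _) (setLIntegral_le_lintegral _ _)
  have hV : (c⁻¹ * ((∫⁻ x, g₁ x) * ∫⁻ x, g₂ x)) ^ p⁻¹ ≠ ∞ :=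
    ENNReal.rpow_ne_top_of_nonneg (inv_nonneg.2 hp0.le)
      (ENNReal.mul_ne_top (ENNReal.inv_ne_top.2 hc0) (ENNReal.mul_ne_top hA hB))
  have hts : ⋃₀ t = ⋃₀ s := by
    refine subset_antisymm (sUnion_mono fun Q hQ => hQ.prop) fun x ⟨P, hP, hxP⟩ => ?_
    obtain ⟨Q, hQ, hxQ⟩ := h𝒟.exists_maximal_mem hn hs hV hvol hP hxP
    exact ⟨Q, hQ, hxQ⟩
  have hdisj := h𝒟.pairwiseDisjoint_maximal hs
  have : Countable t :=
    (h𝒟.countable_of_pairwiseDisjoint (fun Q hQ => hs hQ.prop) hdisj).to_subtype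
  have hmeas : ∀ Q : t, MeasurableSet (Q : Set (Rn n)) := fun Q => h𝒟.measurableSet (hs Q.2.prop)
  have hpw : Pairwise (Function.onFun Disjoint fun Q : t => (Q : Set (Rn n))) :=
    fun P Q hPQ => hdisj P.2 Q.2 (Subtype.coe_injective.ne hPQ)
  rw [← hts, sUnion_eq_iUnion, measure_iUnion hpw hmeas, lintegral_iUnion hmeas hpw,
    lintegral_iUnion hmeas hpw]
  exact ENNReal.mul_tsum_rpow_le_tsum_mul_tsum hp0 hp2 fun Q => h Q Q.2.prop

def fracAvg (n : ℕ) (α : ℝ) (g₁ g₂ : Rn n → ℝ≥0∞) (Q : Set (Rn n)) : ℝ≥0∞ :=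
  volume Q ^ (α / n - 2) * (∫⁻ y in Q, g₁ y) * ∫⁻ y in Q, g₂ y

variable {α : ℝ} {g₁ g₂ : Rn n → ℝ≥0∞}

theorem le_fracAvg_iff {Q : Set (Rn n)} (hQ0 : volume Q ≠ 0) (hQt : volume Q ≠ ∞) {c : ℝ≥0∞} :
    c ≤ fracAvg n α g₁ g₂ Q ↔
      c * volume Q ^ (2 - α / n) ≤ (∫⁻ y in Q, g₁ y) * ∫⁻ y in Q, g₂ y := by
  have hV0 : volume Q ^ (2 - α / n) ≠ 0 := by simp [ENNReal.rpow_eq_zero_iff, hQ0, hQt]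
  have hVt : volume Q ^ (2 - α / n) ≠ ∞ := by simp [ENNReal.rpow_eq_top_iff, hQ0, hQt]
  rw [fracAvg, mul_assoc, show α / n - 2 = -(2 - α / n) by ring, ENNReal.rpow_neg, mul_comm c,
    ENNReal.mul_le_iff_le_inv hV0 hVt]

theorem M2D_integrand_eq {Q : Set (Rn n)} (hQ0 : volume Q ≠ 0) (hQt : volume Q ≠ ∞) :
    (volume Q ^ (-(1 - α / (2 * (n : ℝ)))) * ∫⁻ y in Q, g₁ y) *
      (volume Q ^ (-(1 - α / (2 * (n : ℝ)))) * ∫⁻ y in Q, g₂ y) = fracAvg n α g₁ g₂ Q := by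
  rw [fracAvg, mul_mul_mul_comm, ← ENNReal.rpow_add _ _ hQ0 hQt, mul_assoc]
  congr 2
  ring

theorem IsDyadicGrid.lt_M2D_iff (h𝒟 : IsDyadicGrid 𝒟) {c : ℝ≥0∞} {x : Rn n} :
    c < M2D n α 𝒟 g₁ g₂ x ↔ ∃ Q ∈ 𝒟, x ∈ Q ∧ c < fracAvg n α g₁ g₂ Q := by
  simp only [M2D, lt_iSup_iff, exists_prop]
  refine exists_congr fun Q => and_congr_right fun hQ => and_congr_right fun _ => ?_
  rw [M2D_integrand_eq (h𝒟.volume_ne_zero hQ) (h𝒟.volume_ne_top hQ)]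

end Sparse

section LevelSets

variable {n : ℕ} {𝒟 : Set (Set (Rn n))} {α : ℝ} {g₁ g₂ : Rn n → ℝ≥0∞}

theorem two_sub_div_mem_Ioc (hn : 0 < n) (hα0 : 0 ≤ α) (hα : α < 2 * n) :
    2 - α / n ∈ Ioc (0 : ℝ) 2 := by
  have hnR : (0 : ℝ) < n := Nat.cast_pos.2 hn
  constructor
  · linarith [(div_lt_iff₀ hnR).2 hα]
  · linarith [div_nonneg hα0 hnR.le]

variable (hn : 0 < n) (h𝒟 : IsDyadicGrid 𝒟) (hα0 : 0 ≤ α) (hα : α < 2 * n)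
  (hA : (∫⁻ x, g₁ x) ≠ ∞) (hB : (∫⁻ x, g₂ x) ≠ ∞)
include hn h𝒟 hα0 hα hA hB

section Level

variable {c : ℝ≥0∞} (hc0 : c ≠ 0) (hct : c ≠ ∞)
include hc0 hct

theorem mul_volume_levelSet_rpow_le :
    c * volume {x | c < M2D n α 𝒟 g₁ g₂ x} ^ (2 - α / n) ≤ (∫⁻ x, g₁ x) * ∫⁻ x, g₂ x := by
  obtain ⟨hp0, hp2⟩ := two_sub_div_mem_Ioc hn hα0 hα
  have hE : {x | c < M2D n α 𝒟 g₁ g₂ x} = ⋃₀ {Q | Q ∈ 𝒟 ∧ c < fracAvg n α g₁ g₂ Q} := by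
    ext x
    simp only [mem_ofPred_eq, h𝒟.lt_M2D_iff, mem_sUnion]
    exact ⟨fun ⟨Q, hQ, hxQ, hc⟩ => ⟨Q, ⟨hQ, hc⟩, hxQ⟩, fun ⟨Q, ⟨hQ, hc⟩, hxQ⟩ => ⟨Q, hQ, hxQ, hc⟩⟩
  rw [hE]
  refine (h𝒟.mul_volume_sUnion_rpow_le hn hp0 hp2 hc0 hct hA hB (fun Q hQ => hQ.1)
    fun Q hQ => ?_).trans (mul_le_mul' (setLIntegral_le_lintegral _ _)
      (setLIntegral_le_lintegral _ _))
  exact (le_fracAvg_iff (h𝒟.volume_ne_zero hQ.1) (h𝒟.volume_ne_top hQ.1)).1 hQ.2.le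

theorem volume_levelSet_ne_top : volume {x | c < M2D n α 𝒟 g₁ g₂ x} ≠ ∞ := by
  obtain ⟨hp0, -⟩ := two_sub_div_mem_Ioc hn hα0 hα
  refine ne_top_of_le_ne_top ?_ (ENNReal.le_rpow_inv_of_mul_rpow_le hc0 hct hp0
    (mul_volume_levelSet_rpow_le hn h𝒟 hα0 hα hA hB hc0 hct))
  exact ENNReal.rpow_ne_top_of_nonneg (inv_nonneg.2 hp0.le)
    (ENNReal.mul_ne_top (ENNReal.inv_ne_top.2 hc0) (ENNReal.mul_ne_top hA hB))

theorem exists_maximal_subset_levelSet {x : Rn n} (hx : c < M2D n α 𝒟 g₁ g₂ x) :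
    ∃ Q ∈ maximalCubes 𝒟 {x | c < M2D n α 𝒟 g₁ g₂ x}, x ∈ Q := by
  obtain ⟨P, hP, hxP, hcP⟩ := h𝒟.lt_M2D_iff.1 hx
  exact h𝒟.exists_maximal_mem hn (s := {R | R ∈ 𝒟 ∧ R ⊆ {x | c < M2D n α 𝒟 g₁ g₂ x}})
    (fun R hR => hR.1) (volume_levelSet_ne_top hn h𝒟 hα0 hα hA hB hc0 hct)
    (fun R hR => measure_mono hR.2)
    ⟨hP, fun y hy => h𝒟.lt_M2D_iff.2 ⟨P, hP, hy, hcP⟩⟩ hxP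

/-- A maximal grid cube `Q` inside `{c < M2D}` need not satisfy `c < fracAvg Q` itself, but it is
covered by grid cubes `P ⊆ Q` that do, and the covering inequality passes to `Q`. -/
theorem le_fracAvg_of_maximal {Q : Set (Rn n)}
    (hQ : Q ∈ maximalCubes 𝒟 {x | c < M2D n α 𝒟 g₁ g₂ x}) :
    c ≤ fracAvg n α g₁ g₂ Q := by
  obtain ⟨hp0, hp2⟩ := two_sub_div_mem_Ioc hn hα0 hα
  have hQ_eq : ⋃₀ {P | P ∈ 𝒟 ∧ P ⊆ Q ∧ c < fracAvg n α g₁ g₂ P} = Q := by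
    refine subset_antisymm (sUnion_subset fun P hP => hP.2.1) fun x hx => ?_
    obtain ⟨P, hP, hxP, hcP⟩ := h𝒟.lt_M2D_iff.1 (hQ.prop.2 hx)
    have hPE : P ⊆ {x | c < M2D n α 𝒟 g₁ g₂ x} := fun y hy => h𝒟.lt_M2D_iff.2 ⟨P, hP, hy, hcP⟩
    rcases h𝒟.subset_or_subset hQ.prop.1 hP ⟨x, hx, hxP⟩ with hQP | hPQ
    · exact mem_sUnion.2 ⟨P, ⟨hP, hQ.2 ⟨hP, hPE⟩ hQP, hcP⟩, hxP⟩
    · exact mem_sUnion.2 ⟨P, ⟨hP, hPQ, hcP⟩, hxP⟩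
  have hcov := h𝒟.mul_volume_sUnion_rpow_le hn hp0 hp2 hc0 hct hA hB
    (s := {P | P ∈ 𝒟 ∧ P ⊆ Q ∧ c < fracAvg n α g₁ g₂ P}) (fun P hP => hP.1)
    fun P hP => (le_fracAvg_iff (h𝒟.volume_ne_zero hP.1) (h𝒟.volume_ne_top hP.1)).1 hP.2.2.le
  rw [hQ_eq] at hcov
  exact (le_fracAvg_iff (h𝒟.volume_ne_zero hQ.prop.1) (h𝒟.volume_ne_top hQ.prop.1)).2 hcov

theorem rpow_mul_setLIntegral_levelSet_le (b : ℝ≥0∞) {q : ℝ} (hq : 0 < q) (F : Set (Rn n))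
    (v : Rn n → ℝ≥0∞) :
    (b * c) ^ q * ∫⁻ x in {x | c < M2D n α 𝒟 g₁ g₂ x} \ F, v x ≤
      ∑' Q : maximalCubes 𝒟 {x | c < M2D n α 𝒟 g₁ g₂ x},
        b ^ q * (fracAvg n α g₁ g₂ Q ^ q * wtI v ((Q : Set (Rn n)) \ F)) := by
  set S := maximalCubes 𝒟 {x | c < M2D n α 𝒟 g₁ g₂ x}
  have : Countable S := (h𝒟.countable_of_pairwiseDisjoint (fun Q hQ => hQ.prop.1)
    (h𝒟.pairwiseDisjoint_maximal fun R hR => hR.1)).to_subtype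
  have hcover : {x | c < M2D n α 𝒟 g₁ g₂ x} \ F ⊆ ⋃ Q : S, (Q : Set (Rn n)) \ F :=
    fun x ⟨hx, hxF⟩ =>
      let ⟨Q, hQ, hxQ⟩ := exists_maximal_subset_levelSet hn h𝒟 hα0 hα hA hB hc0 hct hx
      mem_iUnion.2 ⟨⟨Q, hQ⟩, hxQ, hxF⟩
  calc (b * c) ^ q * ∫⁻ x in {x | c < M2D n α 𝒟 g₁ g₂ x} \ F, v x
      ≤ (b * c) ^ q * ∑' Q : S, wtI v ((Q : Set (Rn n)) \ F) := by
        gcongr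
        exact (lintegral_mono_set hcover).trans (lintegral_iUnion_le _ _)
    _ = ∑' Q : S, (b * c) ^ q * wtI v ((Q : Set (Rn n)) \ F) := ENNReal.tsum_mul_left.symm
    _ ≤ _ := ENNReal.tsum_le_tsum fun Q => by
        rw [← mul_assoc, ← ENNReal.mul_rpow_of_nonneg _ _ hq.le]
        gcongr
        exact le_fracAvg_of_maximal hn h𝒟 hα0 hα hA hB hc0 hct Q.2

end Level

theorem volume_iInter_levelSet_eq_zero {a : ℝ≥0∞} (ha : 1 < a) (ha' : a ≠ ∞) :
    volume (⋂ k : ℤ, {x | a ^ k < M2D n α 𝒟 g₁ g₂ x}) = 0 := by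
  obtain ⟨hp0, -⟩ := two_sub_div_mem_Ioc hn hα0 hα
  have ha0 : a ≠ 0 := (zero_lt_one.trans ha).ne'
  refine (ENNReal.rpow_eq_zero_iff_of_pos hp0).1 <|
    ENNReal.eq_zero_of_forall_zpow_mul_le ha ha' (ENNReal.mul_ne_top hA hB) fun k => ?_
  refine le_trans ?_ (mul_volume_levelSet_rpow_le hn h𝒟 hα0 hα hA hB
    (ENNReal.zpow_pos ha0 ha' k).ne' (ENNReal.zpow_lt_top ha0 ha' k).ne)
  gcongr
  exact iInter_subset _ k

end LevelSets

/-- the sparse form controls `∫ (ℳ^𝒟_α(g₁,g₂))^q v`. -/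
theorem stmt18 (n : ℕ) (hn : 0 < n) (α : ℝ) (hα0 : 0 ≤ α) (hα : α < 2 * n)
    (q : ℝ) (hq : 0 < q) :
    ∃ C : ℝ≥0∞, C ≠ ∞ ∧
      ∀ (𝒟 : Set (Set (Rn n))), IsDyadicGrid 𝒟 →
      ∀ (v g₁ g₂ : Rn n → ℝ≥0∞), Measurable v → Measurable g₁ → Measurable g₂ →
        (∫⁻ x, g₁ x) ≠ ∞ → (∫⁻ x, g₂ x) ≠ ∞ →
        let a : ℝ≥0∞ := 2 ^ (((2:ℝ) - α / n) * ((n:ℝ) + 1))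
        let Ω : ℤ → Set (Rn n) := fun k => {x | a ^ k < M2D n α 𝒟 g₁ g₂ x}
        let S : ℤ → Set (Set (Rn n)) := fun k =>
          {Q | Q ∈ 𝒟 ∧ Q ⊆ Ω k ∧ ∀ R ∈ 𝒟, Q ⊆ R → R ⊆ Ω k → R = Q}
        (∫⁻ x, M2D n α 𝒟 g₁ g₂ x ^ q * v x)
          ≤ C * ∑' (k : ℤ), ∑' (Q : ↥(S k)),
              (volume (Q : Set (Rn n)) ^ (α / (n:ℝ) - 2) *
                  (∫⁻ y in (Q : Set (Rn n)), g₁ y) *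
                  (∫⁻ y in (Q : Set (Rn n)), g₂ y)) ^ q *
                wtI v ((Q : Set (Rn n)) \ Ω (k+1)) := by
  have ha : 1 < (2 : ℝ≥0∞) ^ (((2:ℝ) - α / n) * ((n:ℝ) + 1)) :=
    ENNReal.one_lt_rpow one_lt_two (mul_pos (two_sub_div_mem_Ioc hn hα0 hα).1 (by positivity))
  have ha' : (2 : ℝ≥0∞) ^ (((2:ℝ) - α / n) * ((n:ℝ) + 1)) ≠ ∞ :=
    ENNReal.rpow_ne_top_of_nonneg' two_pos ENNReal.ofNat_ne_top
  refine ⟨(2 ^ (((2:ℝ) - α / n) * ((n:ℝ) + 1))) ^ q, ENNReal.rpow_ne_top_of_nonneg hq.le ha', ?_⟩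
  intro 𝒟 h𝒟 v g₁ g₂ hv _ _ hA hB a Ω S
  have ha0 : a ≠ 0 := (zero_lt_one.trans ha).ne'
  have hS : ∀ k, S k = maximalCubes 𝒟 (Ω k) := fun k => (maximalCubes_eq 𝒟 (Ω k)).symm
  calc ∫⁻ x, M2D n α 𝒟 g₁ g₂ x ^ q * v x
      ≤ ∑' k : ℤ, (a ^ (k + 1)) ^ q * ∫⁻ x in Ω k \ Ω (k + 1), v x :=
        lintegral_rpow_mul_le_tsum_layers volume hv ha ha' hq
          (volume_iInter_levelSet_eq_zero hn h𝒟 hα0 hα hA hB ha ha')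
    _ ≤ ∑' k : ℤ, ∑' Q : S k,
          a ^ q * (fracAvg n α g₁ g₂ Q ^ q * wtI v ((Q : Set (Rn n)) \ Ω (k + 1))) :=
        ENNReal.tsum_le_tsum fun k => by
          rw [hS, ENNReal.zpow_add ha0 ha', zpow_one, mul_comm (a ^ k)]
          exact rpow_mul_setLIntegral_levelSet_le hn h𝒟 hα0 hα hA hB
            (ENNReal.zpow_pos ha0 ha' k).ne' (ENNReal.zpow_lt_top ha0 ha' k).ne a hq _ v
    _ = _ := by simp only [ENNReal.tsum_mul_left]; rfl
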